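/- arXiv:0810.0173 — 4 statements merged into one kernel-verified Lean document; each statement's English description precedes it below -/
import Mathlib

section
/- Let V be a real inner product space of dimension 4n with a quaternionic triple J₁, J₂, J₃, and let W ⊆ V be a 2n-dimensional subspace with J₁(W) = W and J₂(W) ⊆ W^⊥. If J = a₁J₁ + a₂J₂ + a₃J₃ with a₁² + a₂² + a₃² = 1 satisfies J(W) = W, then J = J₁ or J = −J₁. -/
/-!
Write `J = a₁J₁ + a₂J₂ + a₃J₃` and pick `w ≠ 0` in `W`. Since `J` and `J₁` preserve `W`, the vector
`Jw - a₁J₁w = a₂u + a₃J₁u`, with `u = J₂w`, lies in `W`. It also lies in `Wᗮ`, because `u ∈ Wᗮ` and the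
orthogonal map `J₁` preserves `W`, hence `Wᗮ`. So it vanishes; but `J₁` is skew, so
`‖a₂u + a₃J₁u‖² = (a₂² + a₃²)‖u‖²` with `u ≠ 0`, forcing `a₂ = a₃ = 0` and `a₁ = ±1`.
-/

open RealInnerProductSpace

section OrthogonalComplexStructure

variable {V : Type*} [NormedAddCommGroup V] [InnerProductSpace ℝ V]
  {J : V →ₗ[ℝ] V} (hiso : ∀ x y : V, ⟪J x, J y⟫ = ⟪x, y⟫)
include hiso

theorem norm_map_eq_of_inner_map_map (x : V) : ‖J x‖ = ‖x‖ := by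
  rw [norm_eq_sqrt_real_inner, norm_eq_sqrt_real_inner, hiso]

theorem inner_map_self_eq_zero_of_map_map_eq_neg (hsq : ∀ x : V, J (J x) = -x) (x : V) :
    ⟪J x, x⟫ = 0 := by
  have h := hiso (J x) x
  rw [hsq, inner_neg_left, real_inner_comm (J x) x] at h
  linarith

theorem norm_smul_add_smul_map_sq (hsq : ∀ x : V, J (J x) = -x) (a b : ℝ) (u : V) :
    ‖a • u + b • J u‖ ^ 2 = (a ^ 2 + b ^ 2) * ‖u‖ ^ 2 := by
  have hskew : ⟪u, J u⟫ = 0 := by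
    rw [real_inner_comm]; exact inner_map_self_eq_zero_of_map_map_eq_neg hiso hsq u
  rw [norm_add_sq_real, norm_smul, norm_smul, real_inner_smul_left, real_inner_smul_right, hskew,
    norm_map_eq_of_inner_map_map hiso, Real.norm_eq_abs, Real.norm_eq_abs]
  simp only [mul_pow, sq_abs]
  ring

theorem map_mem_orthogonal_of_le_map {W : Submodule ℝ V} (hW : W ≤ W.map J) {v : V}
    (hv : v ∈ Wᗮ) : J v ∈ Wᗮ := by
  rw [Submodule.mem_orthogonal]
  intro x hx
  obtain ⟨y, hy, rfl⟩ := hW hx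
  rw [hiso]
  exact (Submodule.mem_orthogonal _ _).mp hv y hy

end OrthogonalComplexStructure

theorem stmt_1_general {V : Type*} [NormedAddCommGroup V] [InnerProductSpace ℝ V]
    (n : ℕ) (hn : 0 < n)
    (J₁ J₂ J₃ : V →ₗ[ℝ] V)
    (h1iso : ∀ x y : V, ⟪J₁ x, J₁ y⟫ = ⟪x, y⟫)
    (h2iso : ∀ x y : V, ⟪J₂ x, J₂ y⟫ = ⟪x, y⟫)
    (h1sq : ∀ x : V, J₁ (J₁ x) = -x)
    (h3def : ∀ x : V, J₃ x = J₁ (J₂ x))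
    (W : Submodule ℝ V)
    (hW : Module.finrank ℝ W = 2 * n)
    (hW1 : W.map J₁ = W)
    (hW2 : W.map J₂ ≤ Wᗮ)
    (a₁ a₂ a₃ : ℝ) (hsum : a₁ ^ 2 + a₂ ^ 2 + a₃ ^ 2 = 1)
    (hJW : W.map (a₁ • J₁ + a₂ • J₂ + a₃ • J₃) = W) :
    a₁ • J₁ + a₂ • J₂ + a₃ • J₃ = J₁ ∨ a₁ • J₁ + a₂ • J₂ + a₃ • J₃ = -J₁ := by
  obtain ⟨w, hw, hw0⟩ : ∃ w ∈ W, w ≠ 0 := Submodule.ne_bot_iff W |>.mp fun h => by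
    rw [h, finrank_bot] at hW; omega
  set u := J₂ w
  have hu : u ∈ Wᗮ := hW2 (Submodule.mem_map_of_mem hw)
  have hmem : a₂ • u + a₃ • J₁ u ∈ W := by
    have hJw : (a₁ • J₁ + a₂ • J₂ + a₃ • J₃) w ∈ W := hJW ▸ Submodule.mem_map_of_mem hw
    have hJ₁w : J₁ w ∈ W := hW1 ▸ Submodule.mem_map_of_mem hw
    convert W.sub_mem hJw (W.smul_mem a₁ hJ₁w) using 1
    simp only [LinearMap.add_apply, LinearMap.smul_apply, h3def, u]
    abel
  have hmem_orth : a₂ • u + a₃ • J₁ u ∈ Wᗮ :=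
    Wᗮ.add_mem (Wᗮ.smul_mem a₂ hu)
      (Wᗮ.smul_mem a₃ (map_mem_orthogonal_of_le_map h1iso hW1.ge hu))
  have hzero : a₂ • u + a₃ • J₁ u = 0 :=
    Submodule.disjoint_def.mp W.orthogonal_disjoint _ hmem hmem_orth
  have hnorm := norm_smul_add_smul_map_sq h1iso h1sq a₂ a₃ u
  rw [hzero, norm_map_eq_of_inner_map_map h2iso, norm_zero, zero_pow two_ne_zero] at hnorm
  have hw_pos : 0 < ‖w‖ ^ 2 := by positivity
  have hsq_zero : a₂ ^ 2 + a₃ ^ 2 = 0 := (mul_eq_zero.mp hnorm.symm).resolve_right hw_pos.ne'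
  have ha₂ : a₂ = 0 := by nlinarith [sq_nonneg a₂, sq_nonneg a₃]
  have ha₃ : a₃ = 0 := by nlinarith [sq_nonneg a₂, sq_nonneg a₃]
  subst ha₂ ha₃
  rcases sq_eq_one_iff.mp (by linarith : a₁ ^ 2 = 1) with rfl | rfl
  · left; simp
  · right; simp

/-- In a `4n`-dimensional real inner product space with a quaternionic triple
`(J₁, J₂, J₃)` and a `2n`-dimensional subspace `W` with `J₁ W = W`, `J₂ W ⊆ Wᗮ`, the only
unit-sphere complex structures `J = a₁J₁ + a₂J₂ + a₃J₃` preserving `W` are `±J₁`. -/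
theorem stmt_1 {V : Type*} [NormedAddCommGroup V] [InnerProductSpace ℝ V]
    [FiniteDimensional ℝ V] (n : ℕ) (hn : 0 < n)
    (hV : Module.finrank ℝ V = 4 * n)
    (J₁ J₂ J₃ : V →ₗ[ℝ] V)
    (h1iso : ∀ x y : V, ⟪J₁ x, J₁ y⟫ = ⟪x, y⟫)
    (h2iso : ∀ x y : V, ⟪J₂ x, J₂ y⟫ = ⟪x, y⟫)
    (h3iso : ∀ x y : V, ⟪J₃ x, J₃ y⟫ = ⟪x, y⟫)
    (h1sq : ∀ x : V, J₁ (J₁ x) = -x)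
    (h2sq : ∀ x : V, J₂ (J₂ x) = -x)
    (h3sq : ∀ x : V, J₃ (J₃ x) = -x)
    (hanti12 : ∀ x : V, J₁ (J₂ x) = -(J₂ (J₁ x)))
    (hanti13 : ∀ x : V, J₁ (J₃ x) = -(J₃ (J₁ x)))
    (hanti23 : ∀ x : V, J₂ (J₃ x) = -(J₃ (J₂ x)))
    (h3def : ∀ x : V, J₃ x = J₁ (J₂ x))
    (W : Submodule ℝ V)
    (hW : Module.finrank ℝ W = 2 * n)
    (hW1 : W.map J₁ = W)
    (hW2 : W.map J₂ ≤ Wᗮ)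
    (a₁ a₂ a₃ : ℝ) (hsum : a₁ ^ 2 + a₂ ^ 2 + a₃ ^ 2 = 1)
    (hJW : W.map (a₁ • J₁ + a₂ • J₂ + a₃ • J₃) = W) :
    a₁ • J₁ + a₂ • J₂ + a₃ • J₃ = J₁ ∨ a₁ • J₁ + a₂ • J₂ + a₃ • J₃ = -J₁ :=
  stmt_1_general n hn J₁ J₂ J₃ h1iso h2iso h1sq h3def W hW hW1 hW2 a₁ a₂ a₃ hsum hJW
end

section
/- Let V be a real inner product space of dimension 4n with a quaternionic triple J₁, J₂, J₃, and let W ⊆ V be a 2n-dimensional subspace with J₁(W) = W and J₂(W) ⊆ W^⊥. Then the set of unit-sphere complex structures J = a₁J₁ + a₂J₂ + a₃J₃ (with a₁² + a₂² + a₃² = 1) satisfying J(W) ⊆ W^⊥ is exactly the circle {a₂J₂ + a₃J₃ : a₂² + a₃² = 1}. -/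
/-!
Write `J = a₁J₁ + K` with `K = a₂J₂ + a₃J₃`. Since `J₁` is an isometry with `J₁ W = W`, the map
`J₃ = J₁J₂` sends `W` into `Wᗮ` along with `J₂`, hence so does `K`. For `0 ≠ w ∈ W` the vector
`J₁w` lies in `W`, so `⟪J₁w, Jw⟫ = a₁‖w‖²`, which vanishes exactly when `a₁ = 0`.
-/

open RealInnerProductSpace

namespace Submodule

variable {V : Type*} [NormedAddCommGroup V] [InnerProductSpace ℝ V] {W : Submodule ℝ V}

theorem map_add_le_orthogonal {f g : V →ₗ[ℝ] V} (hf : W.map f ≤ Wᗮ) (hg : W.map g ≤ Wᗮ) :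
    W.map (f + g) ≤ Wᗮ :=
  (map_add_le (p := W) f g).trans (sup_le hf hg)

theorem map_smul_le_orthogonal {f : V →ₗ[ℝ] V} (a : ℝ) (hf : W.map f ≤ Wᗮ) :
    W.map (a • f) ≤ Wᗮ :=
  (map_smul_le_map W f a).trans hf

theorem map_comp_le_orthogonal_of_isometry {A B : V →ₗ[ℝ] V}
    (hA : ∀ x y : V, ⟪A x, A y⟫ = ⟪x, y⟫) (hWA : W.map A = W) (hB : W.map B ≤ Wᗮ) :
    W.map (A ∘ₗ B) ≤ Wᗮ := by
  rintro _ ⟨w, hw, rfl⟩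
  rw [mem_orthogonal]
  intro u hu
  rw [← hWA] at hu
  obtain ⟨u, hu, rfl⟩ := hu
  rw [LinearMap.comp_apply, hA]
  exact (mem_orthogonal W _).mp (hB ⟨w, hw, rfl⟩) u hu

theorem eq_zero_of_map_smul_add_le_orthogonal {A F : V →ₗ[ℝ] V} (hW : W ≠ ⊥)
    (hA : ∀ x y : V, ⟪A x, A y⟫ = ⟪x, y⟫) (hWA : W.map A ≤ W) (hF : W.map F ≤ Wᗮ) {a : ℝ}
    (h : W.map (a • A + F) ≤ Wᗮ) : a = 0 := by
  obtain ⟨w, hw, hw0⟩ := exists_mem_ne_zero_of_ne_bot hW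
  have hAw : A w ∈ W := hWA ⟨w, hw, rfl⟩
  have hFw : ⟪A w, F w⟫ = 0 := (mem_orthogonal W _).mp (hF ⟨w, hw, rfl⟩) _ hAw
  have hJw : ⟪A w, (a • A + F) w⟫ = 0 := (mem_orthogonal W _).mp (h ⟨w, hw, rfl⟩) _ hAw
  rw [LinearMap.add_apply, LinearMap.smul_apply, inner_add_right, real_inner_smul_right, hA,
    hFw, add_zero] at hJw
  exact (mul_eq_zero.mp hJw).resolve_right (inner_self_ne_zero.mpr hw0)

end Submodule

open Submodule in
theorem stmt_2_general {V : Type*} [NormedAddCommGroup V] [InnerProductSpace ℝ V]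
    (n : ℕ) (hn : 0 < n)
    (J₁ J₂ J₃ : V →ₗ[ℝ] V)
    (h1iso : ∀ x y : V, ⟪J₁ x, J₁ y⟫ = ⟪x, y⟫)
    (h3def : ∀ x : V, J₃ x = J₁ (J₂ x))
    (W : Submodule ℝ V)
    (hW : Module.finrank ℝ W = 2 * n)
    (hW1 : W.map J₁ = W)
    (hW2 : W.map J₂ ≤ Wᗮ) :
    ∀ a₁ a₂ a₃ : ℝ, a₁ ^ 2 + a₂ ^ 2 + a₃ ^ 2 = 1 →
      (W.map (a₁ • J₁ + a₂ • J₂ + a₃ • J₃) ≤ Wᗮ ↔ a₁ = 0) := by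
  intro a₁ a₂ a₃ _
  have hW_ne_bot : W ≠ ⊥ :=
    nontrivial_iff_ne_bot.mp (Module.nontrivial_of_finrank_pos (R := ℝ) (by omega))
  have hW3 : W.map J₃ ≤ Wᗮ := by
    rw [show J₃ = J₁ ∘ₗ J₂ from LinearMap.ext h3def]
    exact map_comp_le_orthogonal_of_isometry h1iso hW1 hW2
  have hK : W.map (a₂ • J₂ + a₃ • J₃) ≤ Wᗮ :=
    map_add_le_orthogonal (map_smul_le_orthogonal a₂ hW2) (map_smul_le_orthogonal a₃ hW3)
  rw [add_assoc]
  refine ⟨eq_zero_of_map_smul_add_le_orthogonal hW_ne_bot h1iso hW1.le hK, ?_⟩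
  rintro rfl
  rwa [zero_smul, zero_add]

/-- In a `4n`-dimensional real inner product space with a quaternionic triple
`(J₁, J₂, J₃)` and a `2n`-dimensional subspace `W` with `J₁ W = W`, `J₂ W ⊆ Wᗮ`, the
unit-sphere complex structures `J = a₁J₁ + a₂J₂ + a₃J₃` with `J W ⊆ Wᗮ` are exactly the
circle `{a₂J₂ + a₃J₃ : a₂² + a₃² = 1}`, i.e. those with `a₁ = 0`. -/
theorem stmt_2 {V : Type*} [NormedAddCommGroup V] [InnerProductSpace ℝ V]
    [FiniteDimensional ℝ V] (n : ℕ) (hn : 0 < n)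
    (hV : Module.finrank ℝ V = 4 * n)
    (J₁ J₂ J₃ : V →ₗ[ℝ] V)
    (h1iso : ∀ x y : V, ⟪J₁ x, J₁ y⟫ = ⟪x, y⟫)
    (h2iso : ∀ x y : V, ⟪J₂ x, J₂ y⟫ = ⟪x, y⟫)
    (h3iso : ∀ x y : V, ⟪J₃ x, J₃ y⟫ = ⟪x, y⟫)
    (h1sq : ∀ x : V, J₁ (J₁ x) = -x)
    (h2sq : ∀ x : V, J₂ (J₂ x) = -x)
    (h3sq : ∀ x : V, J₃ (J₃ x) = -x)
    (hanti12 : ∀ x : V, J₁ (J₂ x) = -(J₂ (J₁ x)))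
    (hanti13 : ∀ x : V, J₁ (J₃ x) = -(J₃ (J₁ x)))
    (hanti23 : ∀ x : V, J₂ (J₃ x) = -(J₃ (J₂ x)))
    (h3def : ∀ x : V, J₃ x = J₁ (J₂ x))
    (W : Submodule ℝ V)
    (hW : Module.finrank ℝ W = 2 * n)
    (hW1 : W.map J₁ = W)
    (hW2 : W.map J₂ ≤ Wᗮ) :
    ∀ a₁ a₂ a₃ : ℝ, a₁ ^ 2 + a₂ ^ 2 + a₃ ^ 2 = 1 →
      (W.map (a₁ • J₁ + a₂ • J₂ + a₃ • J₃) ≤ Wᗮ ↔ a₁ = 0) :=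
  stmt_2_general n hn J₁ J₂ J₃ h1iso h3def W hW hW1 hW2
end

section
/- Let G be a compact connected semisimple Lie group, T ⊆ G a maximal torus, and V a complex irreducible G-representation with highest weight λ. Suppose every weight μ of V with μ ≠ λ and μ ≠ −λ is of the form μ = α + λ or μ = α − λ for some root α of the complexified Lie algebra g^ℂ. If G = G₁ × G₂ with both factors nontrivial, V = V₁ ⊗ V₂, and dim_ℂ V₂ ≥ 3, then dim_ℂ V₁ = 2. -/
/-!
Here `mᵢ` is the weight-multiplicity function of `Vᵢ` (so `dim Vᵢ` is its sum) and `Rᵢ` the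
root set of `gᵢ^ℂ`. Since `dim V₂ ≥ 3` while `±λ₂` have multiplicity at most one, `V₂` has a
weight `ν ≠ ±λ₂`. For every weight `μ₁` of `V₁`, the weight `(μ₁, ν)` of `V` is not `±λ`, so it
is `α ± λ` for a root `α`; as `ν ≠ ±λ₂`, the root lies in the second factor, which forces
`μ₁ = ±λ₁`. Hence `dim V₁ ≤ m₁(λ₁) + m₁(-λ₁) ≤ 2`.
-/

namespace Finsupp

variable {E : Type*}

theorem sum_id_le_add_of_support_subset_pair (m : E →₀ ℕ) {a b : E}
    (h : ∀ x ∈ m.support, x = a ∨ x = b) : (m.sum fun _ k => k) ≤ m a + m b := by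
  classical
  have hs : m.support ⊆ {a, b} := fun x hx => by simpa using h x hx
  rw [m.sum_of_support_subset hs _ fun _ _ => rfl]
  by_cases hab : a = b
  · subst hab
    simp
  · rw [Finset.sum_pair hab]

theorem exists_mem_support_ne_ne_of_three_le_sum (m : E →₀ ℕ) {a b : E}
    (ha : m a ≤ 1) (hb : m b ≤ 1) (h3 : 3 ≤ m.sum fun _ k => k) :
    ∃ x ∈ m.support, x ≠ a ∧ x ≠ b := by
  by_contra! h
  have := m.sum_id_le_add_of_support_subset_pair fun x hx => or_iff_not_imp_left.2 (h x hx)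
  omega

end Finsupp

theorem stmt_6_general {E₁ E₂ : Type*} [AddCommGroup E₁] [AddCommGroup E₂]
    (m₁ : E₁ →₀ ℕ) (m₂ : E₂ →₀ ℕ) (R₁ : Set E₁) (R₂ : Set E₂)
    (lam₁ : E₁) (lam₂ : E₂)
    (hm₁top : m₁ lam₁ = 1) (hm₁low : m₁ (-lam₁) ≤ 1)
    (hm₂top : m₂ lam₂ = 1) (hm₂low : m₂ (-lam₂) ≤ 1)
    (hdim₁ : 2 ≤ m₁.sum fun _ k => k)
    (hdim₂ : 3 ≤ m₂.sum fun _ k => k)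
    (hmain : ∀ μ₁ ∈ m₁.support, ∀ μ₂ ∈ m₂.support,
      ¬(μ₁ = lam₁ ∧ μ₂ = lam₂) → ¬(μ₁ = -lam₁ ∧ μ₂ = -lam₂) →
      (∃ α ∈ R₁, (μ₁ = α + lam₁ ∧ μ₂ = lam₂) ∨ (μ₁ = α - lam₁ ∧ μ₂ = -lam₂)) ∨
      (∃ β ∈ R₂, (μ₁ = lam₁ ∧ μ₂ = β + lam₂) ∨ (μ₁ = -lam₁ ∧ μ₂ = β - lam₂))) :
    (m₁.sum fun _ k => k) = 2 := by
  obtain ⟨ν, hν, hν_top, hν_low⟩ :=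
    m₂.exists_mem_support_ne_ne_of_three_le_sum hm₂top.le hm₂low hdim₂
  have hweights₁ : ∀ μ₁ ∈ m₁.support, μ₁ = lam₁ ∨ μ₁ = -lam₁ := fun μ₁ hμ₁ => by
    rcases hmain μ₁ hμ₁ ν hν (fun h => hν_top h.2) (fun h => hν_low h.2) with
      ⟨_, _, ⟨_, h⟩ | ⟨_, h⟩⟩ | ⟨_, _, ⟨h, _⟩ | ⟨h, _⟩⟩
    · exact absurd h hν_top
    · exact absurd h hν_low
    · exact .inl h
    · exact .inr h
  have := m₁.sum_id_le_add_of_support_subset_pair hweights₁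
  omega

/-- Weight-combinatorial form.  `m₁, m₂` are the weight multiplicity
functions of the irreducible representations `V₁, V₂` of the simple factors
`G₁, G₂` (so `dim Vᵢ = Σ mᵢ`), `R₁, R₂` their root sets, and `λ₁ + λ₂` the highest
weight of `V = V₁ ⊗ V₂`.  Standard facts about irreducible representations are
recorded as hypotheses: the extreme weights `±λᵢ` have multiplicity `≤ 1`, the
highest weight occurs, and each nontrivial factor has `dim Vᵢ ≥ 2`.  The main
hypothesis says: every weight `μ = (μ₁, μ₂)` of `V` with `μ ≠ ±λ` is of the form
`α + λ` or `α − λ` for a root `α` of `g₁^ℂ ⊕ g₂^ℂ` (roots live in exactly one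
factor).  If `dim_ℂ V₂ ≥ 3` then `dim_ℂ V₁ = 2`. -/
theorem stmt_6 {E₁ E₂ : Type*} [AddCommGroup E₁] [AddCommGroup E₂]
    (m₁ : E₁ →₀ ℕ) (m₂ : E₂ →₀ ℕ) (R₁ : Set E₁) (R₂ : Set E₂)
    (lam₁ : E₁) (lam₂ : E₂)
    (hlam₁ : lam₁ ∈ m₁.support) (hlam₂ : lam₂ ∈ m₂.support)
    (hm₁top : m₁ lam₁ = 1) (hm₁low : m₁ (-lam₁) ≤ 1)
    (hm₂top : m₂ lam₂ = 1) (hm₂low : m₂ (-lam₂) ≤ 1)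
    (hnt₁ : lam₁ ≠ -lam₁)
    (hdim₁ : 2 ≤ m₁.sum fun _ k => k)
    (hdim₂ : 3 ≤ m₂.sum fun _ k => k)
    (hmain : ∀ μ₁ ∈ m₁.support, ∀ μ₂ ∈ m₂.support,
      ¬(μ₁ = lam₁ ∧ μ₂ = lam₂) → ¬(μ₁ = -lam₁ ∧ μ₂ = -lam₂) →
      (∃ α ∈ R₁, (μ₁ = α + lam₁ ∧ μ₂ = lam₂) ∨ (μ₁ = α - lam₁ ∧ μ₂ = -lam₂)) ∨
      (∃ β ∈ R₂, (μ₁ = lam₁ ∧ μ₂ = β + lam₂) ∨ (μ₁ = -lam₁ ∧ μ₂ = β - lam₂))) :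
    (m₁.sum fun _ k => k) = 2 :=
  stmt_6_general m₁ m₂ R₁ R₂ lam₁ lam₂ hm₁top hm₁low hm₂top hm₂low hdim₁ hdim₂ hmain
end

section
/- Let G = G₁ × ⋯ × G_s be a compact connected semisimple Lie group with s ≥ 2 simple factors and V = V₁ ⊗ ⋯ ⊗ V_s an irreducible G-representation with highest weight λ. Suppose every weight μ of V with μ ≠ ±λ has the form α ± λ for some root α of g^ℂ. Then s ≤ 3, and if s = 3 then each Vᵢ is 2-dimensional (so each Gᵢ acting on Vᵢ factors through the standard representation of SU(2)). -/
set_option maxHeartbeats 1000000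

/-- Weight-combinatorial form for `G = G₁ × ⋯ × G_s`, `V = V₁ ⊗ ⋯ ⊗ V_s`.
For each simple factor `i`, `m i` is the weight multiplicity function of the
irreducible representation `V i` (so `dim (V i) = Σ (m i)`), `R i` its root set and
`lam i` its highest weight; weights of `V` are the tuples `μ` with `μ i` a weight of
`V i`, and roots of `g^ℂ` are supported in exactly one factor.  Standard facts about
irreducible representations of nontrivial simple factors are recorded as hypotheses
(extreme weights have multiplicity `≤ 1`, each `dim (V i) ≥ 2`, `lam i ≠ -lam i`).
Main hypothesis: every weight `μ ≠ ±λ` of `V` has the form `α ± λ` for a root `α`.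
Conclusion: `s ≤ 3`, and if `s = 3` then each `V i` is 2-dimensional (so each `Gᵢ`
acting on `Vᵢ` factors through the standard representation of `SU(2)`). -/
theorem stmt_7 (s : ℕ) (hs : 2 ≤ s)
    {E : Fin s → Type*} [∀ i, AddCommGroup (E i)]
    (m : ∀ i, E i →₀ ℕ) (R : ∀ i, Set (E i)) (lam : ∀ i, E i)
    (hlam : ∀ i, lam i ∈ (m i).support)
    (hmtop : ∀ i, (m i) (lam i) = 1) (hmlow : ∀ i, (m i) (-(lam i)) ≤ 1)
    (hnt : ∀ i, lam i ≠ -(lam i))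
    (hdim : ∀ i, 2 ≤ (m i).sum fun _ k => k)
    (hmain : ∀ μ : (∀ i, E i), (∀ i, μ i ∈ (m i).support) →
      μ ≠ lam → μ ≠ (fun i => -(lam i)) →
      ∃ i₀, ∃ α ∈ R i₀,
        ((∀ j, j ≠ i₀ → μ j = lam j) ∧ μ i₀ = α + lam i₀) ∨
        ((∀ j, j ≠ i₀ → μ j = -(lam j)) ∧ μ i₀ = α - lam i₀)) :
    s ≤ 3 ∧ (s = 3 → ∀ i, ((m i).sum fun _ k => k) = 2) := by
  classical
  have hnu : ∀ i, ∃ ν ∈ (m i).support, ν ≠ lam i := by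
    intro i
    by_contra h
    push_neg at h
    have hsupp : (m i).support = {lam i} :=
      Finset.eq_singleton_iff_unique_mem.mpr ⟨hlam i, fun x hx => h x hx⟩
    have h1 : (m i).sum (fun _ k => k) = 1 := by
      rw [Finsupp.sum, hsupp, Finset.sum_singleton, hmtop]
    have := hdim i
    omega
  constructor
  · by_contra hs4
    push_neg at hs4
    set i0 : Fin s := ⟨0, by omega⟩ with hi0
    set i1 : Fin s := ⟨1, by omega⟩ with hi1
    set i2 : Fin s := ⟨2, by omega⟩ with hi2
    set i3 : Fin s := ⟨3, by omega⟩ with hi3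
    have h01 : i0 ≠ i1 := by simp [hi0, hi1, Fin.ext_iff]
    have h02 : i2 ≠ i0 := by simp [hi0, hi2, Fin.ext_iff]
    have h12 : i2 ≠ i1 := by simp [hi1, hi2, Fin.ext_iff]
    have h03 : i3 ≠ i0 := by simp [hi0, hi3, Fin.ext_iff]
    have h13 : i3 ≠ i1 := by simp [hi1, hi3, Fin.ext_iff]
    have h23 : i2 ≠ i3 := by simp [hi2, hi3, Fin.ext_iff]
    obtain ⟨ν0, hν0, hν0'⟩ := hnu i0
    obtain ⟨ν1, hν1, hν1'⟩ := hnu i1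
    set μ : ∀ i, E i := Function.update (Function.update lam i0 ν0) i1 ν1 with hμ
    have hμ0 : μ i0 = ν0 := by
      rw [hμ, Function.update_of_ne h01, Function.update_self]
    have hμ1 : μ i1 = ν1 := by rw [hμ, Function.update_self]
    have hμ2 : μ i2 = lam i2 := by
      rw [hμ, Function.update_of_ne h12, Function.update_of_ne h02]
    have hμ3 : μ i3 = lam i3 := by
      rw [hμ, Function.update_of_ne h13, Function.update_of_ne h03]
    have hμsupp : ∀ t, μ t ∈ (m t).support := by
      intro t
      rcases eq_or_ne t i1 with h | h
      · subst h; rw [hμ1]; exact hν1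
      · rcases eq_or_ne t i0 with h' | h'
        · subst h'; rw [hμ0]; exact hν0
        · rw [hμ, Function.update_of_ne h, Function.update_of_ne h']
          exact hlam t
    obtain ⟨j₀, α, hα, hc⟩ := hmain μ hμsupp
      (fun h => hν0' (hμ0.symm.trans ((congrFun h i0).trans rfl)))
      (fun h => hnt i2 (hμ2.symm.trans (congrFun h i2)))
    rcases hc with ⟨hall, -⟩ | ⟨hall, -⟩
    · have e0 : i0 = j₀ := by
        by_contra h; exact hν0' (hμ0.symm.trans (hall i0 h))
      have e1 : i1 = j₀ := by
        by_contra h; exact hν1' (hμ1.symm.trans (hall i1 h))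
      exact h01 (e0.trans e1.symm)
    · have e2 : i2 = j₀ := by
        by_contra h; exact hnt i2 (hμ2.symm.trans (hall i2 h))
      have e3 : i3 = j₀ := by
        by_contra h; exact hnt i3 (hμ3.symm.trans (hall i3 h))
      exact h23 (e2.trans e3.symm)
  · intro hs3
    subst hs3
    have key : ∀ i j k : Fin 3, i ≠ j → i ≠ k → j ≠ k →
        ∀ ν ∈ (m i).support, ν ≠ lam i → ν = -lam i := by
      intro i j k hij hik hjk ν hν hν'
      obtain ⟨x, hx, hx'⟩ := hnu j
      set μ : ∀ t, E t := Function.update (Function.update lam i ν) j x with hμ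
      have hμi : μ i = ν := by
        rw [hμ, Function.update_of_ne hij, Function.update_self]
      have hμj : μ j = x := by rw [hμ, Function.update_self]
      have hμk : μ k = lam k := by
        rw [hμ, Function.update_of_ne hjk.symm, Function.update_of_ne (Ne.symm hik)]
      have hμsupp : ∀ t, μ t ∈ (m t).support := by
        intro t
        rcases eq_or_ne t j with h | h
        · subst h; rw [hμj]; exact hx
        · rcases eq_or_ne t i with h' | h'
          · subst h'; rw [hμi]; exact hν
          · rw [hμ, Function.update_of_ne h, Function.update_of_ne h']
            exact hlam t
      obtain ⟨j₀, α, hα, hc⟩ := hmain μ hμsupp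
        (fun h => hν' (hμi.symm.trans (congrFun h i)))
        (fun h => hnt k (hμk.symm.trans (congrFun h k)))
      rcases hc with ⟨hall, -⟩ | ⟨hall, -⟩
      · have ei : i = j₀ := by
          by_contra h; exact hν' (hμi.symm.trans (hall i h))
        have ej : j = j₀ := by
          by_contra h; exact hx' (hμj.symm.trans (hall j h))
        exact absurd (ei.trans ej.symm) hij
      · have ek : k = j₀ := by
          by_contra h; exact hnt k (hμk.symm.trans (hall k h))
        have hij₀ : i ≠ j₀ := ek ▸ hik
        exact hμi.symm.trans (hall i hij₀)
    intro i
    have hsub : (m i).support ⊆ ({lam i, -lam i} : Finset (E i)) := by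
      intro ν hν
      rcases eq_or_ne ν (lam i) with h | h
      · simp [h]
      · have hν2 : ν = -lam i := by
          fin_cases i
          · exact key 0 1 2 (by decide) (by decide) (by decide) ν hν h
          · exact key 1 0 2 (by decide) (by decide) (by decide) ν hν h
          · exact key 2 0 1 (by decide) (by decide) (by decide) ν hν h
        simp [hν2]
    have hle : (m i).sum (fun _ k => k) ≤ 2 := by
      rw [Finsupp.sum]
      calc ∑ x ∈ (m i).support, m i x
          ≤ ∑ x ∈ ({lam i, -lam i} : Finset (E i)), m i x :=
            Finset.sum_le_sum_of_subset hsub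
        _ = m i (lam i) + m i (-lam i) := Finset.sum_pair (hnt i)
        _ ≤ 2 := by rw [hmtop]; have := hmlow i; omega
    have := hdim i
    omega
end
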